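/- arXiv:2008.02856 — 4 statements merged into one kernel-verified Lean document; each statement's English description precedes it below -/
import Mathlib

section
/- Suppose AᵀA ≠ 0, β > 0, 0 < α < 2/(λ₁ + β), and 0 < δ < 2(λ₁ + β)/λ₁. Then the sequence of aggregate gradients converges to zero: for every ε > 0 there exists a positive integer N_ε such that ‖g(t)‖ ≤ ε for all t ≥ N_ε; equivalently, lim_{t→∞} g(t) = 0. -/
open Matrix Finset

/-- Euclidean norm of a vector in `ℝ^d`. -/
noncomputable def ipgEnorm {d : ℕ} (v : Fin d → ℝ) : ℝ :=
  Real.sqrt (∑ i, v i ^ 2)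

/-! In the eigenbasis `V` of `AᵀA` the preconditioner recursion is Richardson's iteration for
`(AᵀA + βI) K = I`, which converges to `K_β` because `|1 - α (λᵢ + β)| < 1`. The eigen-coordinates
`y = Vᵀ g` of the gradient then satisfy `y(t+1) = (diag(1 - δ λᵢ / (λᵢ + β)) + Q(t)) y(t)` with
`Q(t) → 0`. Since `g(t)` lies in the range of `Aᵀ`, `yᵢ` vanishes whenever `λᵢ = 0`, and on the
remaining coordinates the diagonal factor has modulus `< 1` by the bound on `δ`; so `‖y(t)‖` is
eventually contracted by a fixed factor `< 1`. -/

open Filter Topology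

section Richardson

variable {𝕜 R : Type*} [CommRing 𝕜] [Ring R] [Algebra 𝕜 R]

theorem richardson_sub_eq_pow_mul {H K' : R} {α : 𝕜} {K : ℕ → R} (hHK : H * K' = 1)
    (hK : ∀ t, K (t + 1) = K t - α • (H * K t - 1)) (t : ℕ) :
    K t - K' = (1 - α • H) ^ t * (K 0 - K') := by
  induction t with
  | zero => simp
  | succ t ih =>
    rw [pow_succ', mul_assoc, ← ih, hK]
    conv_lhs => rw [← hHK]
    simp only [sub_mul, one_mul, mul_sub, smul_mul_assoc, smul_sub]
    abel

theorem tendsto_richardson [TopologicalSpace R] [IsTopologicalRing R] {H K' : R} {α : 𝕜}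
    {K : ℕ → R} (hHK : H * K' = 1) (hK : ∀ t, K (t + 1) = K t - α • (H * K t - 1))
    (hpow : Tendsto (fun t => (1 - α • H) ^ t) atTop (𝓝 0)) :
    Tendsto K atTop (𝓝 K') := by
  have hK' : K = fun t => K' + (1 - α • H) ^ t * (K 0 - K') := by
    funext t
    rw [← richardson_sub_eq_pow_mul hHK hK t, add_sub_cancel]
  rw [hK']
  simpa using tendsto_const_nhds.add (hpow.mul_const (K 0 - K'))

end Richardson

section PerturbedIteration

theorem tendsto_zero_of_norm_succ_le {E : Type*} [NormedAddCommGroup E] [CompleteSpace E]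
    {u : ℕ → E} {ρ : ℝ} {c : ℕ → ℝ} (hρ : ρ < 1) (hc : Tendsto c atTop (𝓝 0))
    (hu : ∀ t, ‖u (t + 1)‖ ≤ (ρ + c t) * ‖u t‖) : Tendsto u atTop (𝓝 0) := by
  refine (summable_of_ratio_norm_eventually_le (r := (1 + ρ) / 2) (by linarith)
    ?_).tendsto_atTop_zero
  filter_upwards [hc.eventually_lt_const (show (0 : ℝ) < (1 - ρ) / 2 by linarith)] with t ht
  exact (hu t).trans (mul_le_mul_of_nonneg_right (by linarith) (norm_nonneg _))

variable {ι : Type*} [Fintype ι]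

theorem exists_lt_one_abs_le_of_abs_lt_one (p : ι → ℝ) :
    ∃ ρ, 0 ≤ ρ ∧ ρ < 1 ∧ ∀ i, |p i| < 1 → |p i| ≤ ρ := by
  set s := Finset.univ.filter fun i => |p i| < 1
  rcases s.eq_empty_or_nonempty with hs | hs
  · refine ⟨0, le_rfl, one_pos, fun i hi => ?_⟩
    exact absurd (Finset.mem_filter.2 ⟨Finset.mem_univ i, hi⟩) (hs ▸ Finset.notMem_empty i)
  · obtain ⟨j, hj, hjmax⟩ := s.exists_max_image (fun i => |p i|) hs
    exact ⟨|p j|, abs_nonneg _, (Finset.mem_filter.1 hj).2,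
      fun i hi => hjmax i (Finset.mem_filter.2 ⟨Finset.mem_univ i, hi⟩)⟩

variable [DecidableEq ι]

theorem norm_diagonal_mulVec_le {p v : ι → ℝ} {ρ : ℝ} (hρ : 0 ≤ ρ)
    (hp : ∀ i, v i ≠ 0 → |p i| ≤ ρ) : ‖diagonal p *ᵥ v‖ ≤ ρ * ‖v‖ := by
  refine (pi_norm_le_iff_of_nonneg (by positivity)).2 fun i => ?_
  rw [mulVec_diagonal, norm_mul, Real.norm_eq_abs]
  by_cases hvi : v i = 0
  · rw [hvi, norm_zero, mul_zero]
    positivity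
  · exact mul_le_mul (hp i hvi) (norm_le_pi_norm v i) (norm_nonneg _) hρ

attribute [local instance] Matrix.linftyOpNormedAddCommGroup in
theorem tendsto_zero_of_diagonal_add_recurrence {u : ℕ → ι → ℝ} {p : ι → ℝ}
    {Q : ℕ → Matrix ι ι ℝ} (hu : ∀ t, u (t + 1) = (diagonal p + Q t) *ᵥ u t)
    (hQ : Tendsto Q atTop (𝓝 0)) (hp : ∀ t i, u t i ≠ 0 → |p i| < 1) :
    Tendsto u atTop (𝓝 0) := by
  obtain ⟨ρ, hρ0, hρ1, hρ⟩ := exists_lt_one_abs_le_of_abs_lt_one p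
  refine tendsto_zero_of_norm_succ_le hρ1 (tendsto_zero_iff_norm_tendsto_zero.1 hQ) fun t => ?_
  rw [hu, add_mulVec, add_mul]
  exact (norm_add_le _ _).trans (add_le_add
    (norm_diagonal_mulVec_le hρ0 fun i hi => hρ i (hp t i hi)) (linfty_opNorm_mulVec _ _))

end PerturbedIteration

section OrthogonalConj

variable {n : Type*} [Fintype n] [DecidableEq n] {V : Matrix n n ℝ}

noncomputable def orthogonalConj (V : Matrix n n ℝ) (hV : Vᵀ * V = 1) :
    Matrix n n ℝ ≃⋆ₐ[ℝ] Matrix n n ℝ :=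
  Unitary.conjStarAlgAut ℝ _ ⟨V, mem_unitaryGroup_iff'.2 <| by
    rwa [star_eq_conjTranspose, conjTranspose_eq_transpose_of_trivial]⟩

theorem orthogonalConj_apply (hV : Vᵀ * V = 1) (X : Matrix n n ℝ) :
    orthogonalConj V hV X = V * X * Vᵀ := by
  simp [orthogonalConj, star_eq_conjTranspose]

theorem orthogonalConj_symm_apply (hV : Vᵀ * V = 1) (X : Matrix n n ℝ) :
    (orthogonalConj V hV).symm X = Vᵀ * X * V := by
  simp [orthogonalConj, star_eq_conjTranspose]

theorem continuous_orthogonalConj (hV : Vᵀ * V = 1) : Continuous (orthogonalConj V hV) := by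
  simp only [funext (orthogonalConj_apply hV)]
  fun_prop

theorem continuous_orthogonalConj_symm (hV : Vᵀ * V = 1) :
    Continuous (orthogonalConj V hV).symm := by
  simp only [funext (orthogonalConj_symm_apply hV)]
  fun_prop

theorem tendsto_diagonal_pow_zero {e : n → ℝ} (he : ∀ i, |e i| < 1) :
    Tendsto (fun t => diagonal e ^ t) atTop (𝓝 0) := by
  simp_rw [diagonal_pow, ← diagonal_zero]
  exact continuous_id.matrix_diagonal.tendsto _ |>.comp
    (tendsto_pi_nhds.2 fun i => tendsto_pow_atTop_nhds_zero_of_abs_lt_one (he i))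

theorem tendsto_richardson_orthogonal {h : n → ℝ} {α : ℝ} {K : ℕ → Matrix n n ℝ}
    (hV : Vᵀ * V = 1) (hα : ∀ i, |1 - α * h i| < 1)
    (hK : ∀ t, K (t + 1) = K t - α • (V * diagonal h * Vᵀ * K t - 1)) :
    Tendsto K atTop (𝓝 (V * diagonal h⁻¹ * Vᵀ)) := by
  have hh : ∀ i, h i ≠ 0 := fun i hi => by simpa [hi] using hα i
  simp only [← orthogonalConj_apply hV] at hK ⊢
  refine tendsto_richardson ?_ hK ?_
  · rw [← map_mul, diagonal_mul_diagonal, ← map_one (orthogonalConj V hV), ← diagonal_one]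
    congr 2
    ext i
    exact mul_inv_cancel₀ (hh i)
  · have hpow : ∀ t, (1 - α • orthogonalConj V hV (diagonal h)) ^ t
        = orthogonalConj V hV (diagonal (fun i => 1 - α * h i) ^ t) := by
      intro t
      rw [map_pow, ← map_one (orthogonalConj V hV), ← map_smul, ← map_sub]
      congr 2
      ext i j
      by_cases hij : i = j <;> simp [hij, one_apply]
    simp only [hpow]
    rw [← map_zero (orthogonalConj V hV)]
    exact ((continuous_orthogonalConj hV).tendsto 0).comp (tendsto_diagonal_pow_zero hα)

theorem exists_transpose_mulVec_diagonal_add_recurrence {G : Matrix n n ℝ} {lam c : n → ℝ}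
    {δ : ℝ} {K : ℕ → Matrix n n ℝ} {g : ℕ → n → ℝ} (hV : Vᵀ * V = 1)
    (hG : G = V * diagonal lam * Vᵀ) (hK : Tendsto K atTop (𝓝 (V * diagonal c * Vᵀ)))
    (hg : ∀ t, g (t + 1) = (1 - δ • (G * K (t + 1))) *ᵥ g t) :
    ∃ Q : ℕ → Matrix n n ℝ, Tendsto Q atTop (𝓝 0) ∧ ∀ t,
      Vᵀ *ᵥ g (t + 1) = (diagonal (fun i => 1 - δ * (lam i * c i)) + Q t) *ᵥ (Vᵀ *ᵥ g t) := by
  set ψ := orthogonalConj V hV with hψ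
  refine ⟨fun t => -δ • (diagonal lam * (ψ.symm (K (t + 1)) - diagonal c)), ?_, fun t => ?_⟩
  · have hKc : Tendsto (fun t => ψ.symm (K (t + 1))) atTop (𝓝 (diagonal c)) := by
      have := ((continuous_orthogonalConj_symm hV).tendsto _).comp
        (hK.comp (tendsto_add_atTop_nat 1))
      rwa [← orthogonalConj_apply hV, StarAlgEquiv.symm_apply_apply] at this
    simpa using ((tendsto_const_nhds.mul (hKc.sub_const (diagonal c))).const_smul (-δ))
  · have hVVt : V * Vᵀ = 1 := mul_eq_one_comm.mp hV
    have hdiag :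
        diagonal (fun i => 1 - δ * (lam i * c i)) = 1 - δ • (diagonal lam * diagonal c) := by
      ext i j
      by_cases hij : i = j <;> simp [hij, one_apply]
    calc Vᵀ *ᵥ g (t + 1) = (Vᵀ * (1 - δ • (G * K (t + 1))) * V) *ᵥ (Vᵀ *ᵥ g t) := by
          rw [hg, mulVec_mulVec, mulVec_mulVec, mul_assoc _ V, hVVt, mul_one]
      _ = _ := by
          rw [← orthogonalConj_symm_apply hV, map_sub, map_one, map_smul, map_mul, hG,
            ← orthogonalConj_apply hV, StarAlgEquiv.symm_apply_apply, hdiag, ← hψ]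
          simp only [mul_sub, smul_sub, neg_smul]
          abel_nf

end OrthogonalConj

section Support

variable {m n : Type*} [Fintype m] [DecidableEq n] {W : Matrix m n ℝ} {lam : n → ℝ}

theorem sum_sq_eq_of_transpose_mul_self_eq_diagonal (hW : Wᵀ * W = diagonal lam) (i : n) :
    ∑ k, W k i ^ 2 = lam i := by
  simpa [mul_apply, sq] using congrFun₂ hW i i

theorem nonneg_of_transpose_mul_self_eq_diagonal (hW : Wᵀ * W = diagonal lam) (i : n) :
    0 ≤ lam i :=
  sum_sq_eq_of_transpose_mul_self_eq_diagonal hW i ▸ by positivity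

theorem transpose_mulVec_apply_eq_zero (hW : Wᵀ * W = diagonal lam) {i : n} (hi : lam i = 0)
    (r : m → ℝ) : (Wᵀ *ᵥ r) i = 0 := by
  rw [← sum_sq_eq_of_transpose_mul_self_eq_diagonal hW i,
    Finset.sum_eq_zero_iff_of_nonneg fun k _ => sq_nonneg _] at hi
  have hcol : ∀ k, W k i = 0 := fun k => pow_eq_zero_iff two_ne_zero |>.1 (hi k (mem_univ k))
  simp [mulVec, dotProduct, hcol]

end Support

theorem abs_one_sub_mul_lt_one {α h H : ℝ} (hα : 0 < α) (hh : 0 < h) (hhH : h ≤ H)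
    (hαH : α < 2 / H) : |1 - α * h| < 1 := by
  rw [lt_div_iff₀ (hh.trans_le hhH)] at hαH
  rw [abs_lt]
  constructor <;> nlinarith

theorem abs_one_sub_mul_mul_inv_lt_one {δ β l L : ℝ} (hδ : 0 < δ) (hβ : 0 < β) (hl : 0 < l)
    (hlL : l ≤ L) (hδL : δ < 2 * ((L + β) / L)) : |1 - δ * (l * (l + β)⁻¹)| < 1 := by
  have hL : 0 < L := hl.trans_le hlL
  have hmono : l * (l + β)⁻¹ ≤ L * (L + β)⁻¹ := by
    rw [← div_eq_mul_inv, ← div_eq_mul_inv, div_le_div_iff₀ (by positivity) (by positivity)]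
    nlinarith
  have hδL' : δ * (L * (L + β)⁻¹) < 2 := by
    rw [mul_div_assoc', lt_div_iff₀ hL] at hδL
    rw [← div_eq_mul_inv, mul_div_assoc', div_lt_iff₀ (by positivity)]
    linarith
  have hpos : 0 < δ * (l * (l + β)⁻¹) := by positivity
  rw [abs_lt]
  constructor <;> nlinarith [mul_le_mul_of_nonneg_left hmono hδ.le]

theorem ipg_gradient_succ {n d : ℕ} {A : Matrix (Fin n) (Fin d) ℝ} {B : Fin n → ℝ} {δ : ℝ}
    {K : ℕ → Matrix (Fin d) (Fin d) ℝ} {x g : ℕ → Fin d → ℝ}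
    (hg : ∀ t, g t = Aᵀ *ᵥ (A *ᵥ x t - B)) (hx : ∀ t, x (t + 1) = x t - δ • (K (t + 1) *ᵥ g t))
    (t : ℕ) : g (t + 1) = (1 - δ • (Aᵀ * A * K (t + 1))) *ᵥ g t := by
  rw [hg (t + 1), hx, mulVec_sub A, mulVec_smul, sub_right_comm, mulVec_sub Aᵀ, ← hg, mulVec_smul,
    sub_mulVec, one_mulVec, smul_mulVec, mulVec_mulVec, mulVec_mulVec]

theorem tendsto_ipgEnorm_of_tendsto_transpose_mulVec {d : ℕ} {V : Matrix (Fin d) (Fin d) ℝ}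
    {g : ℕ → Fin d → ℝ} (hV : Vᵀ * V = 1) (hg : Tendsto (fun t => Vᵀ *ᵥ g t) atTop (𝓝 0)) :
    Tendsto (fun t => ipgEnorm (g t)) atTop (𝓝 0) := by
  have hcont : Continuous fun v => ipgEnorm (V *ᵥ v) := by
    unfold ipgEnorm
    fun_prop
  have h0 : ipgEnorm (V *ᵥ 0) = 0 := by simp [ipgEnorm]
  simpa only [Function.comp_def, mulVec_mulVec, mul_eq_one_comm.mp hV, one_mulVec, h0] using
    (hcont.tendsto 0).comp hg

theorem ipg_gradient_convergence_general
    (n d : ℕ) (hd : 0 < d)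
    (A : Matrix (Fin n) (Fin d) ℝ) (B : Fin n → ℝ)
    (lam : Fin d → ℝ) (V : Matrix (Fin d) (Fin d) ℝ)
    (hV : Vᵀ * V = 1)
    (hdiag : Aᵀ * A = V * Matrix.diagonal lam * Vᵀ)
    (hanti : Antitone lam)
    (α β δ : ℝ) (hβ : 0 < β)
    (hα0 : 0 < α) (hα : α < 2 / (lam ⟨0, hd⟩ + β))
    (hδ0 : 0 < δ) (hδ : δ < 2 * ((lam ⟨0, hd⟩ + β) / lam ⟨0, hd⟩))
    (K : ℕ → Matrix (Fin d) (Fin d) ℝ)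
    (hK : ∀ t, K (t + 1) = K t - α • ((Aᵀ * A + β • 1) * K t - 1))
    (x : ℕ → Fin d → ℝ) (g : ℕ → Fin d → ℝ)
    (hg : ∀ t, g t = Aᵀ.mulVec (A.mulVec (x t) - B))
    (hx : ∀ t, x (t + 1) = x t - δ • (K (t + 1)).mulVec (g t)) :
    ∀ ε : ℝ, 0 < ε → ∃ N : ℕ, 0 < N ∧ ∀ t : ℕ, N ≤ t → ipgEnorm (g t) ≤ ε := by
  have hAV : (A * V)ᵀ * (A * V) = diagonal lam := by
    have hconj : (A * V)ᵀ * (A * V) = Vᵀ * (Aᵀ * A) * V := by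
      simp only [transpose_mul, Matrix.mul_assoc]
    rw [hconj, hdiag, ← orthogonalConj_apply hV, ← orthogonalConj_symm_apply hV,
      StarAlgEquiv.symm_apply_apply]
  have hlam : ∀ i, 0 ≤ lam i := nonneg_of_transpose_mul_self_eq_diagonal hAV
  have hlam_le : ∀ i, lam i ≤ lam ⟨0, hd⟩ := fun i => hanti (Nat.zero_le i.val)
  have hH : Aᵀ * A + β • 1 = V * diagonal (fun i => lam i + β) * Vᵀ := by
    have hdiag_add : diagonal (fun i => lam i + β) = diagonal lam + β • 1 := by
      ext i j
      by_cases hij : i = j <;> simp [hij, one_apply]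
    simp [hdiag, hdiag_add, mul_add, add_mul, mul_eq_one_comm.mp hV]
  have hKlim := tendsto_richardson_orthogonal hV
    (fun i => abs_one_sub_mul_lt_one hα0 (by linarith [hlam i]) (by linarith [hlam_le i]) hα)
    (hH ▸ hK)
  obtain ⟨Q, hQ, hy⟩ :=
    exists_transpose_mulVec_diagonal_add_recurrence hV hdiag hKlim (ipg_gradient_succ hg hx)
  have hy0 : Tendsto (fun t => Vᵀ *ᵥ g t) atTop (𝓝 0) := by
    refine tendsto_zero_of_diagonal_add_recurrence hy hQ fun t i hi => ?_
    have hlami : 0 < lam i := (hlam i).lt_of_ne' fun h0 =>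
      hi (by rw [hg, mulVec_mulVec, ← transpose_mul]; exact transpose_mulVec_apply_eq_zero hAV h0 _)
    exact abs_one_sub_mul_mul_inv_lt_one hδ0 hβ hlami (hlam_le i) hδ
  intro ε hε
  obtain ⟨N, hN⟩ := eventually_atTop.1
    ((tendsto_ipgEnorm_of_tendsto_transpose_mulVec hV hy0).eventually_le_const hε)
  exact ⟨N + 1, N.succ_pos, fun t ht => hN t (by omega)⟩

/-- Theorem 1(ii) of the paper: the aggregate gradients of the IPG
method converge to zero: for every `ε > 0` there is a positive integer `N_ε` with
`‖g(t)‖ ≤ ε` for all `t ≥ N_ε`. -/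
theorem ipg_gradient_convergence
    (n d : ℕ) (hd : 0 < d)
    (A : Matrix (Fin n) (Fin d) ℝ) (B : Fin n → ℝ)
    (hAnz : Aᵀ * A ≠ 0)
    (lam : Fin d → ℝ) (V : Matrix (Fin d) (Fin d) ℝ)
    (hV : Vᵀ * V = 1)
    (hdiag : Aᵀ * A = V * Matrix.diagonal lam * Vᵀ)
    (hanti : Antitone lam)
    (α β δ : ℝ) (hβ : 0 < β)
    (hα0 : 0 < α) (hα : α < 2 / (lam ⟨0, hd⟩ + β))
    (hδ0 : 0 < δ) (hδ : δ < 2 * ((lam ⟨0, hd⟩ + β) / lam ⟨0, hd⟩))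
    (K : ℕ → Matrix (Fin d) (Fin d) ℝ)
    (hK : ∀ t, K (t + 1) = K t - α • ((Aᵀ * A + β • 1) * K t - 1))
    (x : ℕ → Fin d → ℝ) (g : ℕ → Fin d → ℝ)
    (hg : ∀ t, g t = Aᵀ.mulVec (A.mulVec (x t) - B))
    (hx : ∀ t, x (t + 1) = x t - δ • (K (t + 1)).mulVec (g t)) :
    ∀ ε : ℝ, 0 < ε → ∃ N : ℕ, 0 < N ∧ ∀ t : ℕ, N ≤ t → ipgEnorm (g t) ≤ ε :=
  ipg_gradient_convergence_general n d hd A B lam V hV hdiag hanti α β δ hβ hα0 hα hδ0 hδ K hK x g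
    hg hx
end

section
/- Suppose AᵀA is positive definite (equivalently, the least-squares problem min_x ½‖Ax − B‖² has a unique solution), and consider the IPG iterates with β = 0, 0 < α < 2/λ₁, and δ = 1, where now K_β = (AᵀA)⁻¹. Then there exists a real number ρ with (λ₁ − λ_d)/(λ₁ + λ_d) ≤ ρ < 1 such that for every iteration t ≥ 0, ‖g(t+1)‖ ≤ λ₁ ‖K(0) − (AᵀA)⁻¹‖_F · ρ^{t+1} · ‖g(t)‖. -/
open Matrix Finset

/-- Euclidean norm of a vector in `ℝ^d`. -/
noncomputable def enorm {d : ℕ} (v : Fin d → ℝ) : ℝ :=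
  Real.sqrt (∑ i, v i ^ 2)

/-- Frobenius norm of a matrix. -/
noncomputable def frob {n d : ℕ} (M : Matrix (Fin n) (Fin d) ℝ) : ℝ :=
  Real.sqrt (∑ i, ∑ j, M i j ^ 2)

/-
The error `E t = K t − (AᵀA)⁻¹` obeys `E (t+1) = (1 − α AᵀA) E t`, so in the eigenbasis of
`AᵀA` it is damped by `(1 − α λᵢ)^t`, and `|1 − α λᵢ| ≤ ρ := max |1 − α λ₁| |1 − α λ_d| < 1`.
With `δ = 1` the gradient obeys `g (t+1) = (1 − AᵀA K (t+1)) g t = −AᵀA E (t+1) g t`, whence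
the bound by Cauchy–Schwarz and orthogonal invariance of the Frobenius norm. The lower bound
on `ρ` holds because no step size beats `α = 2 / (λ₁ + λ_d)`.
-/

section Norms

variable {n d m : ℕ}

lemma enorm_neg_vec (v : Fin d → ℝ) : _root_.enorm (-v) = _root_.enorm v := by
  simp [_root_.enorm]

lemma enorm_mulVec_le_frob_mul (M : Matrix (Fin n) (Fin d) ℝ) (v : Fin d → ℝ) :
    _root_.enorm (M *ᵥ v) ≤ frob M * _root_.enorm v := by
  rw [_root_.enorm, frob, _root_.enorm, ← Real.sqrt_mul (by positivity), Finset.sum_mul]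
  refine Real.sqrt_le_sqrt (Finset.sum_le_sum fun i _ => ?_)
  exact Finset.sum_mul_sq_le_sq_mul_sq univ (M i) v

lemma sum_sq_entries_eq_trace (M : Matrix (Fin n) (Fin d) ℝ) :
    ∑ i, ∑ j, M i j ^ 2 = (Mᵀ * M).trace := by
  rw [Matrix.trace, Finset.sum_comm]
  simp [Matrix.mul_apply, sq]

lemma frob_orthogonal_mul {U : Matrix (Fin d) (Fin d) ℝ} (hU : Uᵀ * U = 1)
    (N : Matrix (Fin d) (Fin m) ℝ) : frob (U * N) = frob N := by
  rw [frob, frob, sum_sq_entries_eq_trace, sum_sq_entries_eq_trace, Matrix.transpose_mul,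
    Matrix.mul_assoc, ← Matrix.mul_assoc Uᵀ, hU, Matrix.one_mul]

lemma frob_diagonal_mul_le {c : Fin d → ℝ} {b : ℝ} (hb : 0 ≤ b) (hc : ∀ i, |c i| ≤ b)
    (N : Matrix (Fin d) (Fin m) ℝ) : frob (diagonal c * N) ≤ b * frob N := by
  rw [frob, frob, ← Real.sqrt_sq hb, ← Real.sqrt_mul (sq_nonneg b), Finset.mul_sum]
  gcongr with i _ j _
  rw [Finset.mul_sum]
  gcongr with j
  rw [diagonal_mul, mul_pow]
  refine mul_le_mul_of_nonneg_right ?_ (sq_nonneg _)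
  exact sq_le_sq' (abs_le.mp (hc i)).1 (abs_le.mp (hc i)).2

end Norms

section StepSize

variable {a b l α : ℝ}

lemma abs_one_sub_mul_le_max (hα : 0 ≤ α) (hbl : b ≤ l) (hla : l ≤ a) :
    |1 - α * l| ≤ max |1 - α * a| |1 - α * b| := by
  have hαl : α * l ≤ α * a := mul_le_mul_of_nonneg_left hla hα
  have hαb : α * b ≤ α * l := mul_le_mul_of_nonneg_left hbl hα
  rw [abs_le]
  constructor
  · calc -max |1 - α * a| |1 - α * b| ≤ -|1 - α * a| := neg_le_neg (le_max_left _ _)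
      _ ≤ 1 - α * a := neg_abs_le _
      _ ≤ 1 - α * l := by linarith
  · calc 1 - α * l ≤ 1 - α * b := by linarith
      _ ≤ |1 - α * b| := le_abs_self _
      _ ≤ max |1 - α * a| |1 - α * b| := le_max_right _ _

lemma max_abs_one_sub_mul_lt_one (hb : 0 < b) (hba : b ≤ a) (hα0 : 0 < α) (hα : α * a < 2) :
    max |1 - α * a| |1 - α * b| < 1 := by
  have hαb : α * b ≤ α * a := mul_le_mul_of_nonneg_left hba hα0.le
  have hαb0 : 0 < α * b := mul_pos hα0 hb
  refine max_lt (abs_lt.mpr ⟨?_, ?_⟩) (abs_lt.mpr ⟨?_, ?_⟩) <;> linarith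

lemma div_le_max_abs_one_sub_mul (hb : 0 < b) (hba : b ≤ a) :
    (a - b) / (a + b) ≤ max |1 - α * a| |1 - α * b| := by
  have hab : 0 ≤ a + b := by linarith
  rw [div_le_iff₀ (by linarith)]
  rcases le_or_gt (α * (a + b)) 2 with hα | hα
  · calc a - b ≤ (1 - α * b) * (a + b) := by nlinarith
      _ ≤ max |1 - α * a| |1 - α * b| * (a + b) :=
        mul_le_mul_of_nonneg_right ((le_abs_self _).trans (le_max_right _ _)) hab
  · calc a - b ≤ -(1 - α * a) * (a + b) := by nlinarith
      _ ≤ max |1 - α * a| |1 - α * b| * (a + b) :=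
        mul_le_mul_of_nonneg_right ((neg_le_abs _).trans (le_max_left _ _)) hab

end StepSize

section Eigenbasis

variable {ι : Type*} [Fintype ι] [DecidableEq ι] {S V : Matrix ι ι ℝ} {lam : ι → ℝ}

lemma transpose_mul_eq_diagonal_mul (hV : Vᵀ * V = 1) (hS : S = V * diagonal lam * Vᵀ) :
    Vᵀ * S = diagonal lam * Vᵀ := by
  rw [hS, ← Matrix.mul_assoc, ← Matrix.mul_assoc, hV, Matrix.one_mul]

lemma Matrix.PosDef.pos_of_eq_mul_diagonal_mul_transpose (hPD : S.PosDef) (hV : Vᵀ * V = 1)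
    (hS : S = V * diagonal lam * Vᵀ) (i : ι) : 0 < lam i := by
  have hinj : Function.Injective V.mulVec :=
    Function.LeftInverse.injective (g := Vᵀ.mulVec) fun v => by
      rw [mulVec_mulVec, hV, one_mulVec]
  have hD : (diagonal lam).PosDef := by
    have h := hPD.conjTranspose_mul_mul_same hinj
    rwa [conjTranspose_eq_transpose_of_trivial, transpose_mul_eq_diagonal_mul hV hS,
      Matrix.mul_assoc, hV, Matrix.mul_one] at h
  simpa using hD.diag_pos (i := i)

variable (hinv : S * S⁻¹ = 1) {α : ℝ} {K : ℕ → Matrix ι ι ℝ}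
  (hK : ∀ t, K (t + 1) = K t - α • (S * K t - 1))
include hinv hK

lemma ipg_error_succ (t : ℕ) : K (t + 1) - S⁻¹ = (1 - α • S) * (K t - S⁻¹) := by
  rw [hK t, Matrix.sub_mul, Matrix.one_mul, Matrix.smul_mul, Matrix.mul_sub, hinv, smul_sub]
  abel

lemma transpose_mul_ipg_error (hV : Vᵀ * V = 1) (hS : S = V * diagonal lam * Vᵀ) (t : ℕ) :
    Vᵀ * (K t - S⁻¹) = diagonal (fun i => (1 - α * lam i) ^ t) * (Vᵀ * (K 0 - S⁻¹)) := by
  induction t with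
  | zero => simp
  | succ t ih =>
    have hstep : Vᵀ * (1 - α • S) = diagonal (fun i => 1 - α * lam i) * Vᵀ := by
      have hdiag : diagonal (fun i => 1 - α * lam i) = 1 - α • diagonal lam := by
        ext i j
        rcases eq_or_ne i j with rfl | h <;> simp [*]
      rw [hdiag, Matrix.mul_sub, Matrix.mul_smul, transpose_mul_eq_diagonal_mul hV hS,
        Matrix.mul_one, Matrix.sub_mul, Matrix.one_mul, Matrix.smul_mul]
    rw [ipg_error_succ hinv hK, ← Matrix.mul_assoc, hstep, Matrix.mul_assoc, ih,
      ← Matrix.mul_assoc, diagonal_mul_diagonal]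
    simp only [pow_succ']

lemma one_sub_mul_ipg_eq (hV : Vᵀ * V = 1) (hS : S = V * diagonal lam * Vᵀ) (t : ℕ) :
    1 - S * K t
      = -(V * diagonal (fun i => lam i * (1 - α * lam i) ^ t) * (Vᵀ * (K 0 - S⁻¹))) := by
  calc 1 - S * K t = -(S * (K t - S⁻¹)) := by rw [Matrix.mul_sub, hinv, neg_sub]
    _ = -(V * diagonal lam * (Vᵀ * (K t - S⁻¹))) := by
      nth_rewrite 1 [hS]
      rw [Matrix.mul_assoc (V * diagonal lam)]
    _ = _ := by
      rw [transpose_mul_ipg_error hinv hK hV hS, ← Matrix.mul_assoc (V * diagonal lam),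
        Matrix.mul_assoc V, diagonal_mul_diagonal]

end Eigenbasis

lemma gradient_preconditioned_step {m ι : Type*} [Fintype m] [Fintype ι] [DecidableEq ι]
    (A : Matrix m ι ℝ) (B : m → ℝ) (P : Matrix ι ι ℝ) (δ : ℝ) (x : ι → ℝ) :
    Aᵀ *ᵥ (A *ᵥ (x - δ • P *ᵥ (Aᵀ *ᵥ (A *ᵥ x - B))) - B)
      = (1 - δ • (Aᵀ * A * P)) *ᵥ (Aᵀ *ᵥ (A *ᵥ x - B)) := by
  set g := Aᵀ *ᵥ (A *ᵥ x - B)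
  have hres : A *ᵥ (x - δ • P *ᵥ g) - B = (A *ᵥ x - B) - δ • A *ᵥ P *ᵥ g := by
    rw [mulVec_sub, mulVec_smul]
    abel
  rw [hres, mulVec_sub, mulVec_smul, sub_mulVec, one_mulVec, smul_mulVec, mulVec_mulVec,
    mulVec_mulVec]

lemma enorm_orthogonal_diagonal_mul_mulVec_le {d m : ℕ} {V : Matrix (Fin d) (Fin d) ℝ}
    (hV : Vᵀ * V = 1) {c : Fin d → ℝ} {b : ℝ} (hb : 0 ≤ b) (hc : ∀ i, |c i| ≤ b)
    (N : Matrix (Fin d) (Fin m) ℝ) (v : Fin m → ℝ) :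
    _root_.enorm ((V * diagonal c * N) *ᵥ v) ≤ b * frob N * _root_.enorm v :=
  calc _root_.enorm ((V * diagonal c * N) *ᵥ v)
      ≤ frob (V * (diagonal c * N)) * _root_.enorm v := by
        rw [← Matrix.mul_assoc]
        exact enorm_mulVec_le_frob_mul _ _
    _ ≤ b * frob N * _root_.enorm v := by
        rw [frob_orthogonal_mul hV]
        exact mul_le_mul_of_nonneg_right (frob_diagonal_mul_le hb hc N) (Real.sqrt_nonneg _)

/-- Corollary 1 of the paper: superlinear convergence of IPG when
`AᵀA` is positive definite, with `β = 0` and `δ = 1`: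
`‖g(t+1)‖ ≤ λ₁ ‖K(0) − (AᵀA)⁻¹‖_F ρ^{t+1} ‖g(t)‖` for some `ρ ∈ [(λ₁−λ_d)/(λ₁+λ_d), 1)`. -/
theorem ipg_superlinear_convergence
    (n d : ℕ) (hd : 0 < d)
    (A : Matrix (Fin n) (Fin d) ℝ) (B : Fin n → ℝ)
    (hPD : (Aᵀ * A).PosDef)
    (lam : Fin d → ℝ) (V : Matrix (Fin d) (Fin d) ℝ)
    (hV : Vᵀ * V = 1)
    (hdiag : Aᵀ * A = V * Matrix.diagonal lam * Vᵀ)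
    (hanti : Antitone lam)
    (α δ : ℝ) (hα0 : 0 < α) (hα : α < 2 / lam ⟨0, hd⟩) (hδ : δ = 1)
    (K : ℕ → Matrix (Fin d) (Fin d) ℝ)
    (hK : ∀ t, K (t + 1) = K t - α • ((Aᵀ * A) * K t - 1))
    (x : ℕ → Fin d → ℝ) (g : ℕ → Fin d → ℝ)
    (hg : ∀ t, g t = Aᵀ.mulVec (A.mulVec (x t) - B))
    (hx : ∀ t, x (t + 1) = x t - δ • (K (t + 1)).mulVec (g t)) :
    ∃ ρ : ℝ,
      (lam ⟨0, hd⟩ - lam ⟨d - 1, by omega⟩) /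
          (lam ⟨0, hd⟩ + lam ⟨d - 1, by omega⟩) ≤ ρ ∧
      ρ < 1 ∧
      ∀ t : ℕ,
        _root_.enorm (g (t + 1)) ≤
          lam ⟨0, hd⟩ * frob (K 0 - (Aᵀ * A)⁻¹) * ρ ^ (t + 1) * _root_.enorm (g t) := by
  subst hδ
  set S := Aᵀ * A
  set l₁ := lam ⟨0, hd⟩
  set l_d := lam ⟨d - 1, by omega⟩
  set ρ := max |1 - α * l₁| |1 - α * l_d|
  have hinv : S * S⁻¹ = 1 := mul_nonsing_inv S (isUnit_iff_ne_zero.mpr hPD.det_pos.ne')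
  have hlam_pos := hPD.pos_of_eq_mul_diagonal_mul_transpose hV hdiag
  have hlam_mem : ∀ i, l_d ≤ lam i ∧ lam i ≤ l₁ := fun i =>
    ⟨hanti (Fin.mk_le_mk.mpr (by omega)), hanti (Fin.mk_le_mk.mpr (by omega))⟩
  have hαl₁ : α * l₁ < 2 := (lt_div_iff₀ (hlam_pos _)).mp hα
  refine ⟨ρ, div_le_max_abs_one_sub_mul (hlam_pos _) (hlam_mem _).1,
    max_abs_one_sub_mul_lt_one (hlam_pos _) (hlam_mem _).1 hα0 hαl₁, fun t => ?_⟩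
  have hdamp : ∀ i, |lam i * (1 - α * lam i) ^ (t + 1)| ≤ l₁ * ρ ^ (t + 1) := fun i => by
    rw [abs_mul, abs_pow, abs_of_pos (hlam_pos i)]
    exact mul_le_mul (hlam_mem i).2 (pow_le_pow_left₀ (abs_nonneg _)
      (abs_one_sub_mul_le_max hα0.le (hlam_mem i).1 (hlam_mem i).2) _) (by positivity)
      (hlam_pos _).le
  have hVVt : Vᵀᵀ * Vᵀ = 1 := by rw [transpose_transpose, mul_eq_one_comm.mp hV]
  calc _root_.enorm (g (t + 1))
      = _root_.enorm ((V * diagonal (fun i => lam i * (1 - α * lam i) ^ (t + 1))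
          * (Vᵀ * (K 0 - S⁻¹))) *ᵥ g t) := by
        rw [hg (t + 1), hx t, hg t, gradient_preconditioned_step, one_smul,
          one_sub_mul_ipg_eq hinv hK hV hdiag, neg_mulVec, enorm_neg_vec]
    _ ≤ l₁ * ρ ^ (t + 1) * frob (Vᵀ * (K 0 - S⁻¹)) * _root_.enorm (g t) :=
        enorm_orthogonal_diagonal_mul_mulVec_le hV ((abs_nonneg _).trans (hdamp ⟨0, hd⟩))
          hdamp _ _
    _ = l₁ * frob (K 0 - S⁻¹) * ρ ^ (t + 1) * _root_.enorm (g t) := by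
        rw [frob_orthogonal_mul hVVt]
        ring
end

section
/- Suppose AᵀA ≠ 0 and β > 0, and let 0 < δ < 2(λ₁ + β)/λ₁. Then for every vector g ∈ ℝ^d lying in the column space (range) of AᵀA, one has ‖g − δ · AᵀA K_β g‖ ≤ max{|1 − δλ₁/(λ₁+β)|, |1 − δλ_r/(λ_r+β)|} · ‖g‖, and moreover max{|1 − δλ₁/(λ₁+β)|, |1 − δλ_r/(λ_r+β)|} < 1. -/
open Matrix Finset

/-- Euclidean norm of a vector in `ℝ^d`. -/
noncomputable def vecEnorm {d : ℕ} (v : Fin d → ℝ) : ℝ :=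
  Real.sqrt (∑ i, v i ^ 2)

/-!
In the orthonormal eigenbasis `V` of `AᵀA`, the operator `AᵀA K_β` is diagonal with entries
`λⱼ / (λⱼ + β)`, so `g - δ AᵀA K_β g` has coordinates `(1 - δ λⱼ / (λⱼ + β)) (Vᵀ g)ⱼ`.
For `g` in the range of `AᵀA` only the coordinates with `λⱼ ≠ 0`, i.e. `λ_r ≤ λⱼ ≤ λ₁`, survive,
and `t ↦ 1 - δ t / (t + β)` is decreasing, so each factor lies between its values at `λ₁` and `λ_r`.
Both of those are `< 1` in absolute value because `t ↦ (t + β) / t` is decreasing, so the bound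
on `δ` at `λ₁` also holds at `λ_r`.
-/

section OrthogonalConjugation

variable {ι 𝕜 : Type*} [Fintype ι] [DecidableEq ι]

theorem conj_diagonal_mul_conj_diagonal [CommRing 𝕜] {V : Matrix ι ι 𝕜} (hV : Vᵀ * V = 1)
    (a b : ι → 𝕜) :
    V * diagonal a * Vᵀ * (V * diagonal b * Vᵀ) = V * diagonal (a * b) * Vᵀ := by
  simp only [Matrix.mul_assoc]
  rw [← Matrix.mul_assoc Vᵀ, hV, Matrix.one_mul, ← Matrix.mul_assoc (diagonal a),
    diagonal_mul_diagonal]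
  rfl

theorem conj_diagonal_add_smul_one [CommRing 𝕜] {V : Matrix ι ι 𝕜} (hV : V * Vᵀ = 1)
    (a : ι → 𝕜) (c : 𝕜) :
    V * diagonal a * Vᵀ + c • 1 = V * diagonal (fun j => a j + c) * Vᵀ := by
  rw [← diagonal_add, ← smul_one_eq_diagonal, Matrix.mul_add, Matrix.add_mul, Matrix.mul_smul,
    Matrix.mul_one, Matrix.smul_mul, hV]

theorem inv_conj_diagonal [Field 𝕜] {V : Matrix ι ι 𝕜} (hV : Vᵀ * V = 1) {a : ι → 𝕜}
    (ha : ∀ j, a j ≠ 0) : (V * diagonal a * Vᵀ)⁻¹ = V * diagonal a⁻¹ * Vᵀ := by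
  have haa : a * a⁻¹ = fun _ => 1 := funext fun j => mul_inv_cancel₀ (ha j)
  refine inv_eq_right_inv ?_
  rw [conj_diagonal_mul_conj_diagonal hV, haa, diagonal_one, Matrix.mul_one,
    mul_eq_one_comm.mp hV]

theorem conj_diagonal_mul_inv_add_smul_one [Field 𝕜] {V : Matrix ι ι 𝕜} (hV : Vᵀ * V = 1)
    {a : ι → 𝕜} {c : 𝕜} (hac : ∀ j, a j + c ≠ 0) :
    V * diagonal a * Vᵀ * (V * diagonal a * Vᵀ + c • 1)⁻¹ =
      V * diagonal (fun j => a j / (a j + c)) * Vᵀ := by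
  rw [conj_diagonal_add_smul_one (mul_eq_one_comm.mp hV), inv_conj_diagonal hV hac,
    conj_diagonal_mul_conj_diagonal hV]
  simp_rw [div_eq_mul_inv]
  rfl

theorem sub_smul_conj_diagonal_mulVec [CommRing 𝕜] {V : Matrix ι ι 𝕜} (hV : V * Vᵀ = 1)
    (q : ι → 𝕜) (δ : 𝕜) (g : ι → 𝕜) :
    g - δ • (V * diagonal q * Vᵀ) *ᵥ g = V *ᵥ fun j => (1 - δ * q j) * (Vᵀ *ᵥ g) j := by
  have hg : g = V *ᵥ Vᵀ *ᵥ g := by rw [mulVec_mulVec, hV, one_mulVec]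
  have hMg : (V * diagonal q * Vᵀ) *ᵥ g = V *ᵥ diagonal q *ᵥ Vᵀ *ᵥ g := by
    simp only [mulVec_mulVec, Matrix.mul_assoc]
  rw [hMg, ← mulVec_smul]
  nth_rw 1 [hg]
  rw [← mulVec_sub]
  congr 1
  ext j
  simp only [Pi.sub_apply, Pi.smul_apply, mulVec_diagonal, smul_eq_mul]
  ring

theorem transpose_mulVec_apply_eq_zero_s10 [CommRing 𝕜] {V : Matrix ι ι 𝕜} (hV : Vᵀ * V = 1)
    {a : ι → 𝕜} (y : ι → 𝕜) {j : ι} (hj : a j = 0) :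
    (Vᵀ *ᵥ (V * diagonal a * Vᵀ) *ᵥ y) j = 0 := by
  rw [mulVec_mulVec, ← Matrix.mul_assoc, ← Matrix.mul_assoc, hV, Matrix.one_mul,
    ← mulVec_mulVec, mulVec_diagonal, hj, zero_mul]

end OrthogonalConjugation

theorem vecEnorm_eq_sqrt_dotProduct {d : ℕ} (v : Fin d → ℝ) : vecEnorm v = √(v ⬝ᵥ v) := by
  simp only [vecEnorm, dotProduct, sq]

theorem vecEnorm_mulVec_of_transpose_mul_self {d : ℕ} {V : Matrix (Fin d) (Fin d) ℝ}
    (hV : Vᵀ * V = 1) (x : Fin d → ℝ) : vecEnorm (V *ᵥ x) = vecEnorm x := by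
  rw [vecEnorm_eq_sqrt_dotProduct, vecEnorm_eq_sqrt_dotProduct, dotProduct_mulVec,
    ← mulVec_transpose, mulVec_mulVec, hV, one_mulVec]

theorem vecEnorm_mul_le {d : ℕ} (c w : Fin d → ℝ) {C : ℝ} (hC : 0 ≤ C)
    (hc : ∀ j, w j ≠ 0 → |c j| ≤ C) : vecEnorm (fun j => c j * w j) ≤ C * vecEnorm w := by
  have hterm : ∀ j, (c j * w j) ^ 2 ≤ C ^ 2 * w j ^ 2 := fun j => by
    rcases eq_or_ne (w j) 0 with hw | hw
    · simp [hw]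
    · rw [mul_pow, ← sq_abs (c j)]
      gcongr
      exact hc j hw
  calc vecEnorm (fun j => c j * w j) ≤ √(∑ j, C ^ 2 * w j ^ 2) :=
        Real.sqrt_le_sqrt (sum_le_sum fun j _ => hterm j)
    _ = C * vecEnorm w := by
        rw [← mul_sum, Real.sqrt_mul (sq_nonneg C), Real.sqrt_sq hC, vecEnorm]

theorem div_add_le_div_add {a b β : ℝ} (hβ : 0 ≤ β) (ha : 0 < a + β) (hab : a ≤ b) :
    a / (a + β) ≤ b / (b + β) := by
  rw [div_le_div_iff₀ ha (by linarith)]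
  nlinarith

theorem add_div_le_add_div {a b β : ℝ} (hβ : 0 ≤ β) (ha : 0 < a) (hab : a ≤ b) :
    (b + β) / b ≤ (a + β) / a := by
  rw [div_le_div_iff₀ (ha.trans_le hab) ha]
  nlinarith

theorem abs_one_sub_mul_div_add_le_max {a b t β δ : ℝ} (hδ : 0 ≤ δ) (hβ : 0 ≤ β)
    (ha : 0 < a + β) (hat : a ≤ t) (htb : t ≤ b) :
    |1 - δ * (t / (t + β))| ≤ max |1 - δ * (b / (b + β))| |1 - δ * (a / (a + β))| := by
  have ht : 0 < t + β := by linarith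
  refine abs_le_max_abs_abs ?_ ?_ <;> gcongr 1 - δ * ?_
  · exact div_add_le_div_add hβ ht htb
  · exact div_add_le_div_add hβ ha hat

theorem abs_one_sub_mul_div_add_lt_one {t β δ : ℝ} (ht : 0 < t) (hδ0 : 0 < δ)
    (hδ : δ < 2 * ((t + β) / t)) : |1 - δ * (t / (t + β))| < 1 := by
  have hδt : δ * t < 2 * (t + β) := by rwa [mul_div_assoc', lt_div_iff₀ ht] at hδ
  have htβ : 0 < t + β := by nlinarith
  have hpos : 0 < δ * (t / (t + β)) := by positivity
  have hlt : δ * (t / (t + β)) < 2 := by rwa [mul_div_assoc', div_lt_iff₀ htβ]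
  rw [abs_lt]
  constructor <;> linarith

theorem vecEnorm_sub_smul_conj_diagonal_mulVec_le {d : ℕ} {V : Matrix (Fin d) (Fin d) ℝ}
    (hV : Vᵀ * V = 1) (q : Fin d → ℝ) (δ : ℝ) (g : Fin d → ℝ) {C : ℝ} (hC : 0 ≤ C)
    (hq : ∀ j, (Vᵀ *ᵥ g) j ≠ 0 → |1 - δ * q j| ≤ C) :
    vecEnorm (g - δ • (V * diagonal q * Vᵀ) *ᵥ g) ≤ C * vecEnorm g := by
  have hV' : V * Vᵀ = 1 := mul_eq_one_comm.mp hV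
  rw [sub_smul_conj_diagonal_mulVec hV', vecEnorm_mulVec_of_transpose_mul_self hV]
  calc _ ≤ C * vecEnorm (Vᵀ *ᵥ g) := vecEnorm_mul_le _ _ hC hq
    _ = C * vecEnorm g := by
        rw [← vecEnorm_mulVec_of_transpose_mul_self hV (Vᵀ *ᵥ g), mulVec_mulVec, hV', one_mulVec]

/-- for any vector `g` in the column space of `AᵀA`,
`‖g − δ AᵀA K_β g‖ ≤ max{|1 − δλ₁/(λ₁+β)|, |1 − δλ_r/(λ_r+β)|} ‖g‖`, and this maximum
is strictly less than `1` whenever `0 < δ < 2(λ₁+β)/λ₁`. -/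
theorem preconditioned_contraction_on_range
    (n d : ℕ) (hd : 0 < d)
    (A : Matrix (Fin n) (Fin d) ℝ)
    (lam : Fin d → ℝ) (V : Matrix (Fin d) (Fin d) ℝ)
    (hV : Vᵀ * V = 1)
    (hdiag : Aᵀ * A = V * Matrix.diagonal lam * Vᵀ)
    (hanti : Antitone lam)
    (r : ℕ) (hrd : r ≤ d)
    (hlamr : 0 < lam ⟨r - 1, by omega⟩)
    (hzero : ∀ j : Fin d, r ≤ (j : ℕ) → lam j = 0)
    (β δ : ℝ) (hβ : 0 < β)
    (hδ0 : 0 < δ) (hδ : δ < 2 * ((lam ⟨0, hd⟩ + β) / lam ⟨0, hd⟩)) :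
    (∀ g : Fin d → ℝ, (∃ y : Fin d → ℝ, (Aᵀ * A).mulVec y = g) →
      vecEnorm (g - δ • ((Aᵀ * A) * (Aᵀ * A + β • 1)⁻¹).mulVec g) ≤
        max |1 - δ * (lam ⟨0, hd⟩ / (lam ⟨0, hd⟩ + β))|
            |1 - δ * (lam ⟨r - 1, by omega⟩ / (lam ⟨r - 1, by omega⟩ + β))| *
          vecEnorm g) ∧
    max |1 - δ * (lam ⟨0, hd⟩ / (lam ⟨0, hd⟩ + β))|
        |1 - δ * (lam ⟨r - 1, by omega⟩ / (lam ⟨r - 1, by omega⟩ + β))| < 1 := by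
  have hbetween : ∀ j : Fin d, (j : ℕ) < r →
      lam ⟨r - 1, by omega⟩ ≤ lam j ∧ lam j ≤ lam ⟨0, hd⟩ := fun j hj =>
    ⟨hanti (Fin.le_def.mpr (Nat.le_sub_one_of_lt hj)), hanti (Fin.le_def.mpr (Nat.zero_le _))⟩
  have hnonneg : ∀ j, 0 ≤ lam j := fun j => by
    rcases le_or_gt r j with hj | hj
    · exact (hzero j hj).ge
    · exact hlamr.le.trans (hbetween j hj).1
  have hlr_le : lam ⟨r - 1, by omega⟩ ≤ lam ⟨0, hd⟩ := hanti (Fin.le_def.mpr (Nat.zero_le _))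
  have hδr : δ < 2 * ((lam ⟨r - 1, by omega⟩ + β) / lam ⟨r - 1, by omega⟩) :=
    hδ.trans_le (by gcongr 2 * ?_; exact add_div_le_add_div hβ.le hlamr hlr_le)
  refine ⟨?_, max_lt (abs_one_sub_mul_div_add_lt_one (hlamr.trans_le hlr_le) hδ0 hδ)
    (abs_one_sub_mul_div_add_lt_one hlamr hδ0 hδr)⟩
  rintro _ ⟨y, rfl⟩
  rw [hdiag, conj_diagonal_mul_inv_add_smul_one hV fun j => by linarith [hnonneg j]]
  refine vecEnorm_sub_smul_conj_diagonal_mulVec_le hV _ δ _ (le_max_of_le_left (abs_nonneg _))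
    fun j hj => ?_
  have hjr : (j : ℕ) < r := by
    by_contra! hrj
    exact hj (transpose_mulVec_apply_eq_zero_s10 hV y (hzero j hrj))
  exact abs_one_sub_mul_div_add_le_max hδ0.le hβ.le (by linarith) (hbetween j hjr).1
    (hbetween j hjr).2
end

section
/- Under the noisy IPG model (with δ = 1), for every iteration t ≥ 0, ‖z(t+1)‖ ≤ (R(t+1)·R(t)·…·R(1)) · ‖z⁰(0)‖ + (1 + R(t+1) + R(t+1)R(t) + … + R(t+1)R(t)⋯R(1)) · w. -/
open Matrix Finset

/-- Euclidean norm of a vector in `ℝ^d`. -/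
noncomputable def enormR {d : ℕ} (v : Fin d → ℝ) : ℝ :=
  Real.sqrt (∑ i, v i ^ 2)

/-- The `j`-th column of a matrix. -/
def mcol {n d : ℕ} (M : Matrix (Fin n) (Fin d) ℝ) (j : Fin d) : Fin n → ℝ :=
  fun i => M i j

/-!
Writing `G = (AᵀA)⁻¹`, the noiseless gain update is `K⁰(t+1) - G = (I - αAᵀA)(K(t) - G)`, so every
column of the gain error contracts by `ρ` per step and then picks up at most `w` of noise; hence its
`j`-th column has norm at most `ρᵗ‖k̃⁰_j(0)‖ + (1 + ⋯ + ρᵗ)w` and its Frobenius norm is at most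
`S(t)`. Since `I - K(t)AᵀA = (G - K(t))AᵀA` and `‖AᵀA‖ = λ₁`, the state error obeys
`‖z(t+1)‖ ≤ R(t+1)‖z(t)‖ + w`, and unrolling this recursion gives the bound.
-/

section EuclideanNorm

variable {n d : ℕ}

lemma enormR_eq_norm_toLp (v : Fin d → ℝ) : enormR v = ‖WithLp.toLp 2 v‖ := by
  simp [EuclideanSpace.norm_eq, enormR]

lemma enormR_nonneg (v : Fin d → ℝ) : 0 ≤ enormR v := Real.sqrt_nonneg _

lemma enormR_add_le (u v : Fin d → ℝ) : enormR (u + v) ≤ enormR u + enormR v := by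
  simpa only [enormR_eq_norm_toLp, WithLp.toLp_add] using norm_add_le _ _

lemma enormR_add_le_of_le {u v : Fin d → ℝ} {w : ℝ} (hv : enormR v ≤ w) :
    enormR (u + v) ≤ enormR u + w :=
  (enormR_add_le u v).trans (by gcongr)

lemma enormR_sub_comm (u v : Fin d → ℝ) : enormR (u - v) = enormR (v - u) := by
  simpa only [enormR_eq_norm_toLp, WithLp.toLp_sub] using norm_sub_rev _ _

lemma enormR_mulVec_le_sqrt_sum_sq_col (M : Matrix (Fin n) (Fin d) ℝ) (u : Fin d → ℝ) :
    enormR (M *ᵥ u) ≤ Real.sqrt (∑ j, enormR (mcol M j) ^ 2) * enormR u := by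
  have hcols : M *ᵥ u = ∑ j, u j • mcol M j := by
    funext i
    simp [mulVec, dotProduct, mcol, mul_comm]
  have htriangle : enormR (M *ᵥ u) ≤ ∑ j, |u j| * enormR (mcol M j) := by
    simpa only [hcols, enormR_eq_norm_toLp, WithLp.toLp_sum, WithLp.toLp_smul, norm_smul,
      Real.norm_eq_abs] using norm_sum_le univ fun j => u j • WithLp.toLp 2 (mcol M j)
  have hu : enormR u = Real.sqrt (∑ j, |u j| ^ 2) := by simp [enormR, sq_abs]
  rw [hu, mul_comm, ← Real.sqrt_mul (by positivity)]
  refine htriangle.trans (Real.le_sqrt_of_sq_le ?_)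
  exact sum_mul_sq_le_sq_mul_sq _ _ _

lemma enormR_eq_sqrt_dotProduct (v : Fin d → ℝ) : enormR v = Real.sqrt (v ⬝ᵥ v) := by
  simp [enormR, dotProduct, sq]

lemma enormR_mulVec_of_transpose_mul_self {V : Matrix (Fin d) (Fin d) ℝ} (hV : Vᵀ * V = 1)
    (x : Fin d → ℝ) : enormR (V *ᵥ x) = enormR x := by
  rw [enormR_eq_sqrt_dotProduct, enormR_eq_sqrt_dotProduct, dotProduct_mulVec,
    ← vecMul_transpose, vecMul_vecMul, hV, vecMul_one]

lemma enormR_diagonal_mulVec_le {lam : Fin d → ℝ} {c : ℝ} (hlam : ∀ i, |lam i| ≤ c)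
    (u : Fin d → ℝ) : enormR (diagonal lam *ᵥ u) ≤ c * enormR u := by
  rcases isEmpty_or_nonempty (Fin d) with _ | ⟨⟨i₀⟩⟩
  · simp [enormR]
  have hc : 0 ≤ c := (abs_nonneg _).trans (hlam i₀)
  rw [enormR, enormR, ← Real.sqrt_sq hc, ← Real.sqrt_mul (sq_nonneg c), mul_sum]
  gcongr with i
  rw [mulVec_diagonal, mul_pow, ← sq_abs (lam i)]
  gcongr
  exact hlam i

lemma enormR_mulVec_le_of_eq_conj_diagonal {M V : Matrix (Fin d) (Fin d) ℝ} {lam : Fin d → ℝ}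
    {c : ℝ} (hV : Vᵀ * V = 1) (hM : M = V * diagonal lam * Vᵀ) (hlam : ∀ i, |lam i| ≤ c)
    (u : Fin d → ℝ) : enormR (M *ᵥ u) ≤ c * enormR u := by
  have hVt : (Vᵀ)ᵀ * Vᵀ = 1 := by rw [transpose_transpose, mul_eq_one_comm, hV]
  calc enormR (M *ᵥ u) = enormR (diagonal lam *ᵥ (Vᵀ *ᵥ u)) := by
        rw [hM, ← mulVec_mulVec, ← mulVec_mulVec, enormR_mulVec_of_transpose_mul_self hV]
    _ ≤ c * enormR u := (enormR_diagonal_mulVec_le hlam _).trans_eq <| by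
        rw [enormR_mulVec_of_transpose_mul_self hVt]

end EuclideanNorm

lemma mcol_mul {n d : ℕ} (M : Matrix (Fin n) (Fin n) ℝ) (N : Matrix (Fin n) (Fin d) ℝ)
    (j : Fin d) : mcol (M * N) j = M *ᵥ mcol N j := by
  funext i
  simp [mcol, mul_apply, mulVec, dotProduct]

lemma pos_of_posDef_eq_conj_diagonal {d : ℕ} {M V : Matrix (Fin d) (Fin d) ℝ} {lam : Fin d → ℝ}
    (hPD : M.PosDef) (hV : Vᵀ * V = 1) (hM : M = V * diagonal lam * Vᵀ) (i : Fin d) :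
    0 < lam i := by
  have hconj : Vᵀ * M * V = diagonal lam := by
    rw [hM, ← Matrix.mul_assoc, ← Matrix.mul_assoc, hV, Matrix.one_mul, Matrix.mul_assoc, hV,
      Matrix.mul_one]
  have hinj : Function.Injective V.mulVec := fun x y hxy => by
    simpa [mulVec_mulVec, hV] using congrArg (Vᵀ *ᵥ ·) hxy
  have hdiag := hPD.conjTranspose_mul_mul_same hinj
  rw [conjTranspose_eq_transpose_of_trivial, hconj, posDef_diagonal_iff] at hdiag
  exact hdiag i

lemma le_prod_mul_add_sum_prod_mul_of_le_mul_add {e r : ℕ → ℝ} {c w : ℝ} (hr : ∀ t, 0 ≤ r t)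
    (h0 : e 0 ≤ c + w) (hstep : ∀ t, e (t + 1) ≤ r (t + 1) * e t + w) (t : ℕ) :
    e t ≤ (∏ k ∈ range t, r (k + 1)) * c + (∑ k ∈ range (t + 1), ∏ i ∈ range k, r (t - i)) * w := by
  induction t with
  | zero => simpa using h0
  | succ t ih =>
    have hsum : ∑ k ∈ range (t + 2), ∏ i ∈ range k, r (t + 1 - i)
        = (∑ k ∈ range (t + 1), ∏ i ∈ range k, r (t - i)) * r (t + 1) + 1 := by
      simp only [sum_range_succ' _ (t + 1), prod_range_succ', sum_mul, Nat.sub_zero,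
        Nat.add_sub_add_right, prod_range_zero]
    calc e (t + 1) ≤ r (t + 1) * e t + w := hstep t
      _ ≤ r (t + 1) * ((∏ k ∈ range t, r (k + 1)) * c
            + (∑ k ∈ range (t + 1), ∏ i ∈ range k, r (t - i)) * w) + w := by
          gcongr
          exact hr _
      _ = _ := by rw [prod_range_succ, hsum]; ring

lemma le_pow_mul_add_geom_sum_mul_of_le_mul_add {e : ℕ → ℝ} {ρ c w : ℝ} (hρ : 0 ≤ ρ)
    (h0 : e 0 ≤ c + w) (hstep : ∀ t, e (t + 1) ≤ ρ * e t + w) (t : ℕ) :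
    e t ≤ ρ ^ t * c + (∑ i ∈ range (t + 1), ρ ^ i) * w := by
  simpa using le_prod_mul_add_sum_prod_mul_of_le_mul_add (r := fun _ => ρ) (fun _ => hρ) h0 hstep t

section NoisyIPG

variable {d : ℕ} {M G : Matrix (Fin d) (Fin d) ℝ}

lemma enormR_col_sub_le_of_noisy_gain {K K0 W : ℕ → Matrix (Fin d) (Fin d) ℝ} {α ρ w : ℝ}
    (hρ : 0 ≤ ρ) (hMG : M * G = 1)
    (hcontract : ∀ v, enormR ((1 - α • M) *ᵥ v) ≤ ρ * enormR v)
    (hK0 : ∀ t, K0 (t + 1) = K t - α • (M * K t - 1)) (hK : ∀ t, K t = K0 t + W t)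
    (hW : ∀ t j, enormR (mcol (W t) j) ≤ w) (j : Fin d) (t : ℕ) :
    enormR (mcol (K t) j - mcol G j) ≤
      ρ ^ t * enormR (mcol (K0 0) j - mcol G j) + (∑ i ∈ range (t + 1), ρ ^ i) * w := by
  have hnoise : ∀ t, mcol (K t) j - mcol G j = (mcol (K0 t) j - mcol G j) + mcol (W t) j :=
    fun t => by rw [hK]; exact add_sub_right_comm _ _ _
  have hgain : ∀ t, K0 (t + 1) - G = (1 - α • M) * (K t - G) := by
    intro t
    rw [hK0, Matrix.sub_mul, Matrix.one_mul, Matrix.smul_mul, Matrix.mul_sub, hMG, smul_sub]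
    abel
  refine le_pow_mul_add_geom_sum_mul_of_le_mul_add (e := fun t => enormR (mcol (K t) j - mcol G j))
    hρ ?_ (fun t => ?_) t
  · rw [hnoise]
    exact enormR_add_le_of_le (hW 0 j)
  · rw [hnoise]
    refine enormR_add_le_of_le (hW _ j) |>.trans (add_le_add_left ?_ w)
    have hcol : mcol (K0 (t + 1)) j - mcol G j = (1 - α • M) *ᵥ (mcol (K t) j - mcol G j) :=
      (mcol_mul _ (K t - G) j).symm ▸ congrArg (mcol · j) (hgain t)
    exact hcol ▸ hcontract _

lemma enormR_one_sub_mul_mulVec_le (hGM : G * M = 1) (K : Matrix (Fin d) (Fin d) ℝ)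
    (v : Fin d → ℝ) :
    enormR ((1 - K * M) *ᵥ v) ≤
      Real.sqrt (∑ j, enormR (mcol K j - mcol G j) ^ 2) * enormR (M *ᵥ v) := by
  rw [← hGM, ← Matrix.sub_mul, ← mulVec_mulVec]
  refine (enormR_mulVec_le_sqrt_sum_sq_col _ _).trans_eq ?_
  simp only [enormR_sub_comm (mcol K _)]
  rfl

end NoisyIPG

theorem noisy_ipg_error_bound_general
    (n d : ℕ) (hd : 0 < d)
    (A : Matrix (Fin n) (Fin d) ℝ)
    (hPD : (Aᵀ * A).PosDef)
    (lam : Fin d → ℝ) (V : Matrix (Fin d) (Fin d) ℝ)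
    (hV : Vᵀ * V = 1)
    (hdiag : Aᵀ * A = V * Matrix.diagonal lam * Vᵀ)
    (hanti : Antitone lam)
    (α w ρ : ℝ) (hρ0 : 0 < ρ)
    (hcontract : ∀ v : Fin d → ℝ,
      enormR (((1 : Matrix (Fin d) (Fin d) ℝ) - α • (Aᵀ * A)).mulVec v) ≤ ρ * enormR v)
    (K K0 W : ℕ → Matrix (Fin d) (Fin d) ℝ)
    (hK0 : ∀ t, K0 (t + 1) = K t - α • ((Aᵀ * A) * K t - 1))
    (hKnoise : ∀ t, K t = K0 t + W t)
    (hW : ∀ (t : ℕ) (j : Fin d), enormR (mcol (W t) j) ≤ w)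
    (z z0 wx : ℕ → Fin d → ℝ)
    (hz0 : ∀ t, z0 (t + 1) =
      ((1 : Matrix (Fin d) (Fin d) ℝ) - K (t + 1) * (Aᵀ * A)).mulVec (z t))
    (hznoise : ∀ t, z t = z0 t + wx t)
    (hwx : ∀ t, enormR (wx t) ≤ w)
    (S R : ℕ → ℝ)
    (hS : ∀ t, S t = Real.sqrt (∑ j : Fin d,
      (ρ ^ t * enormR (mcol (K0 0) j - mcol (Aᵀ * A)⁻¹ j) +
        (∑ i ∈ Finset.range (t + 1), ρ ^ i) * w) ^ 2))
    (hR : ∀ t, R t = lam ⟨0, hd⟩ * S t) :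
    ∀ t : ℕ,
      enormR (z (t + 1)) ≤
        (∏ k ∈ Finset.range (t + 1), R (k + 1)) * enormR (z0 0) +
          (∑ k ∈ Finset.range (t + 2), ∏ i ∈ Finset.range k, R (t + 1 - i)) * w := by
  have hlam : ∀ i, 0 < lam i := pos_of_posDef_eq_conj_diagonal hPD hV hdiag
  have hnorm : ∀ v, enormR ((Aᵀ * A) *ᵥ v) ≤ lam ⟨0, hd⟩ * enormR v :=
    enormR_mulVec_le_of_eq_conj_diagonal hV hdiag fun i =>
      (abs_of_pos (hlam i)).trans_le (hanti (Nat.zero_le i.val : (⟨0, hd⟩ : Fin d) ≤ i))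
  have hdet : IsUnit (Aᵀ * A).det := hPD.det_pos.ne'.isUnit
  have hR0 : ∀ t, 0 ≤ R t := fun t => by
    rw [hR, hS]
    exact mul_nonneg (hlam _).le (Real.sqrt_nonneg _)
  have hcontractR : ∀ t v, enormR ((1 - K t * (Aᵀ * A)) *ᵥ v) ≤ R t * enormR v := fun t v => by
    refine (enormR_one_sub_mul_mulVec_le (nonsing_inv_mul _ hdet) (K t) v).trans ?_
    rw [hR, hS, mul_comm (lam _), mul_assoc]
    have hgain := enormR_col_sub_le_of_noisy_gain hρ0.le (mul_nonsing_inv _ hdet) hcontract hK0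
      hKnoise hW
    gcongr with j
    exacts [enormR_nonneg _, enormR_nonneg _, hgain j t, hnorm v]
  intro t
  refine le_prod_mul_add_sum_prod_mul_of_le_mul_add (e := fun t => enormR (z t)) hR0 ?_
    (fun t => ?_) (t + 1)
  · rw [hznoise]
    exact enormR_add_le_of_le (hwx 0)
  · rw [hznoise, hz0]
    exact enormR_add_le_of_le (hwx _) |>.trans (add_le_add_left (hcontractR _ _) w)

/-- under the noisy IPG model (with `δ = 1`), the estimation error
satisfies `‖z(t+1)‖ ≤ (R(t+1)⋯R(1)) ‖z⁰(0)‖ + (1 + R(t+1) + R(t+1)R(t) + ⋯ +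
R(t+1)⋯R(1)) w` for every iteration `t ≥ 0`. -/
theorem noisy_ipg_error_bound
    (n d : ℕ) (hd : 0 < d)
    (A : Matrix (Fin n) (Fin d) ℝ) (B : Fin n → ℝ)
    (hPD : (Aᵀ * A).PosDef)
    (xstar : Fin d → ℝ) (hxstar : (Aᵀ * A).mulVec xstar = Aᵀ.mulVec B)
    (lam : Fin d → ℝ) (V : Matrix (Fin d) (Fin d) ℝ)
    (hV : Vᵀ * V = 1)
    (hdiag : Aᵀ * A = V * Matrix.diagonal lam * Vᵀ)
    (hanti : Antitone lam)
    (α w ρ : ℝ) (hα0 : 0 < α) (hα : α < 2 / lam ⟨0, hd⟩)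
    (hw : 0 < w) (hρ0 : 0 < ρ) (hρ1 : ρ < 1)
    (hcontract : ∀ v : Fin d → ℝ,
      enormR (((1 : Matrix (Fin d) (Fin d) ℝ) - α • (Aᵀ * A)).mulVec v) ≤ ρ * enormR v)
    (K K0 W : ℕ → Matrix (Fin d) (Fin d) ℝ)
    (hK0 : ∀ t, K0 (t + 1) = K t - α • ((Aᵀ * A) * K t - 1))
    (hKnoise : ∀ t, K t = K0 t + W t)
    (hW : ∀ (t : ℕ) (j : Fin d), enormR (mcol (W t) j) ≤ w)
    (z z0 wx : ℕ → Fin d → ℝ)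
    (hz0 : ∀ t, z0 (t + 1) =
      ((1 : Matrix (Fin d) (Fin d) ℝ) - K (t + 1) * (Aᵀ * A)).mulVec (z t))
    (hznoise : ∀ t, z t = z0 t + wx t)
    (hwx : ∀ t, enormR (wx t) ≤ w)
    (S R : ℕ → ℝ)
    (hS : ∀ t, S t = Real.sqrt (∑ j : Fin d,
      (ρ ^ t * enormR (mcol (K0 0) j - mcol (Aᵀ * A)⁻¹ j) +
        (∑ i ∈ Finset.range (t + 1), ρ ^ i) * w) ^ 2))
    (hR : ∀ t, R t = lam ⟨0, hd⟩ * S t) :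
    ∀ t : ℕ,
      enormR (z (t + 1)) ≤
        (∏ k ∈ Finset.range (t + 1), R (k + 1)) * enormR (z0 0) +
          (∑ k ∈ Finset.range (t + 2), ∏ i ∈ Finset.range k, R (t + 1 - i)) * w :=
  noisy_ipg_error_bound_general n d hd A hPD lam V hV hdiag hanti α w ρ hρ0 hcontract K K0 W hK0
    hKnoise hW z z0 wx hz0 hznoise hwx S R hS hR
end
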